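/- Let R be a commutative ring and V, W two R-modules. Equip T̄(V) = ⊕_{n≥1} V^{⊗n} and T̄(W) = ⊕_{n≥1} W^{⊗n} with the deconcatenation comultiplications Δ(v₁⊗⋯⊗vₙ) = Σ_{i=1}^{n−1} (v₁⊗⋯⊗vᵢ) ⊗ (v_{i+1}⊗⋯⊗vₙ). Then for every family of R-linear maps (fₖ : V^{⊗k} → W)_{k≥1} there is a unique R-linear map F : T̄(V) → T̄(W) satisfying Δ∘F = (F⊗F)∘Δ (a morphism of non-counital coalgebras) whose corestriction π₁∘F equals the map f : T̄(V) → W determined by the fₖ. Explicitly, the component of F from V^{⊗n} to W^{⊗m} is Σ f_{k₁}⊗⋯⊗f_{k_m}, the sum over all compositions k₁+⋯+k_m = n with kᵢ ≥ 1. -/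

import Mathlib

open DirectSum PiTensorProduct
open scoped TensorProduct

variable (R : Type) [CommRing R] (V W : Type) [AddCommGroup V] [Module R V]
  [AddCommGroup W] [Module R W]

/-- The reduced tensor module `T̄(V) = ⊕_{n ≥ 1} V^{⊗n}`. -/
abbrev RedTensor := ⨁ n : ℕ, (⨂[R]^(n + 1) V)

/-- The splitting `V^{⊗(n+1)} → V^{⊗(a+1)} ⊗ V^{⊗(b+1)}` sending an elementary tensor word
to (first `a+1` letters) ⊗ (last `b+1` letters), when `n + 1 = (a+1) + (b+1)`. -/
noncomputable def splitAt (a b n : ℕ) (h : n + 1 = (a + 1) + (b + 1)) :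
    (⨂[R]^(n + 1) V) →ₗ[R] (⨂[R]^(a + 1) V) ⊗[R] (⨂[R]^(b + 1) V) :=
  ((PiTensorProduct.tmulEquiv (R := R) (M := V)
      (ι := Fin (a + 1)) (ι₂ := Fin (b + 1))).symm.toLinearMap).comp
    (PiTensorProduct.reindex R (fun _ : Fin (n + 1) => V)
      ((finCongr h).trans finSumFinEquiv.symm)).toLinearMap

/-- The deconcatenation comultiplication
`Δ(v₁⊗⋯⊗vₙ) = Σ_{i=1}^{n−1} (v₁⊗⋯⊗vᵢ) ⊗ (v_{i+1}⊗⋯⊗vₙ)` on the reduced tensor module. -/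
noncomputable def deconcat :
    RedTensor R V →ₗ[R] (RedTensor R V) ⊗[R] (RedTensor R V) :=
  DirectSum.toModule R ℕ ((RedTensor R V) ⊗[R] (RedTensor R V)) fun n =>
    ∑ i : Fin n,
      (TensorProduct.map
          (DirectSum.lof R ℕ (fun k => ⨂[R]^(k + 1) V) (i : ℕ))
          (DirectSum.lof R ℕ (fun k => ⨂[R]^(k + 1) V) (n - 1 - (i : ℕ)))).comp
        (splitAt R V (i : ℕ) (n - 1 - (i : ℕ)) n (by have := i.isLt; omega))

/-- The projection `π₁ : T̄(V) → V` onto the summand `V = V^{⊗1}`. -/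
noncomputable def corestrict : RedTensor R V →ₗ[R] V :=
  (PiTensorProduct.subsingletonEquiv (0 : Fin 1)).toLinearMap.comp
    (DirectSum.component R ℕ (fun k => ⨂[R]^(k + 1) V) 0)

/-! ### Auxiliary material -/

section Ext

open LinearMap

variable {ι κ : Type} [DecidableEq ι] [DecidableEq κ]
  (A : ι → Type) (B : κ → Type) [∀ i, AddCommGroup (A i)] [∀ i, Module R (A i)]
  [∀ j, AddCommGroup (B j)] [∀ j, Module R (B j)]
  (N : Type) [AddCommGroup N] [Module R N]

lemma comp_directSumLeft (i : ι) :
    (DirectSum.component R ι (fun i => A i ⊗[R] N) i) ∘ₗ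
      (TensorProduct.directSumLeft R R A N).toLinearMap
    = rTensor N (DirectSum.component R ι A i) := by
  apply TensorProduct.ext
  apply DirectSum.linearMap_ext
  intro j
  ext x y
  simp only [LinearMap.compr₂_apply, LinearMap.compr₂ₛₗ_apply, TensorProduct.mk_apply, LinearMap.comp_apply,
    LinearEquiv.coe_coe, TensorProduct.directSumLeft_tmul_lof, rTensor_tmul]
  rw [DirectSum.component.of, DirectSum.component.of]
  split
  · subst ‹j = i›; rfl
  · simp

lemma comp_directSumRight (j : κ) :
    (DirectSum.component R κ (fun j => N ⊗[R] B j) j) ∘ₗ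
      (TensorProduct.directSumRight R R N B).toLinearMap
    = lTensor N (DirectSum.component R κ B j) := by
  apply TensorProduct.ext
  ext x k y
  simp only [LinearMap.compr₂_apply, LinearMap.compr₂ₛₗ_apply, TensorProduct.mk_apply, LinearMap.comp_apply,
    LinearEquiv.coe_coe, TensorProduct.directSumRight_tmul_lof, lTensor_tmul]
  rw [DirectSum.component.of, DirectSum.component.of]
  split
  · subst ‹k = j›; rfl
  · simp

lemma tensor_ext_left {z z' : (⨁ i, A i) ⊗[R] N}
    (h : ∀ i, rTensor N (DirectSum.component R ι A i) z
       = rTensor N (DirectSum.component R ι A i) z') : z = z' := by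
  apply (TensorProduct.directSumLeft R R A N).injective
  apply DirectSum.ext_component R
  intro i
  have h1 := congrArg (fun F : _ →ₗ[R] _ => F z) (comp_directSumLeft R A N i)
  have h2 := congrArg (fun F : _ →ₗ[R] _ => F z') (comp_directSumLeft R A N i)
  simp only [LinearMap.comp_apply, LinearEquiv.coe_coe] at h1 h2
  rw [h1, h2, h]

lemma tensor_ext_right {z z' : N ⊗[R] (⨁ j, B j)}
    (h : ∀ j, lTensor N (DirectSum.component R κ B j) z
       = lTensor N (DirectSum.component R κ B j) z') : z = z' := by
  apply (TensorProduct.directSumRight R R N B).injective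
  apply DirectSum.ext_component R
  intro j
  have h1 := congrArg (fun F : _ →ₗ[R] _ => F z) (comp_directSumRight R B N j)
  have h2 := congrArg (fun F : _ →ₗ[R] _ => F z') (comp_directSumRight R B N j)
  simp only [LinearMap.comp_apply, LinearEquiv.coe_coe] at h1 h2
  rw [h1, h2, h]

lemma tensor_ext_pair {z z' : (⨁ i, A i) ⊗[R] (⨁ j, B j)}
    (h : ∀ i j, TensorProduct.map (DirectSum.component R ι A i) (DirectSum.component R κ B j) z
       = TensorProduct.map (DirectSum.component R ι A i) (DirectSum.component R κ B j) z') :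
    z = z' := by
  apply tensor_ext_left R A
  intro i
  apply tensor_ext_right R B
  intro j
  rw [← LinearMap.comp_apply, ← LinearMap.comp_apply, LinearMap.lTensor_comp_rTensor]
  exact h i j

lemma tensor_ext_triple {z z' : N ⊗[R] ((⨁ i, A i) ⊗[R] (⨁ j, B j))}
    (h : ∀ i j, lTensor N (TensorProduct.map (DirectSum.component R ι A i)
          (DirectSum.component R κ B j)) z
       = lTensor N (TensorProduct.map (DirectSum.component R ι A i)
          (DirectSum.component R κ B j)) z') : z = z' := by
  apply (LinearEquiv.lTensor N (TensorProduct.directSumLeft R R A (⨁ j, B j))).injective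
  apply tensor_ext_right R (fun i => A i ⊗[R] (⨁ j, B j)) N
  intro i
  have hsuff : ∀ w : N ⊗[R] ((⨁ i, A i) ⊗[R] (⨁ j, B j)),
      lTensor N (DirectSum.component R ι (fun i => A i ⊗[R] (⨁ j, B j)) i)
        ((LinearEquiv.lTensor N (TensorProduct.directSumLeft R R A (⨁ j, B j))) w)
      = lTensor N (rTensor (⨁ j, B j) (DirectSum.component R ι A i)) w := by
    intro w
    have hc : lTensor N (DirectSum.component R ι (fun i => A i ⊗[R] (⨁ j, B j)) i) ∘ₗ
        (TensorProduct.directSumLeft R R A (⨁ j, B j)).toLinearMap.lTensor N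
        = lTensor N (rTensor (⨁ j, B j) (DirectSum.component R ι A i)) := by
      rw [← LinearMap.lTensor_comp, comp_directSumLeft]
    have := congrArg (fun F : _ →ₗ[R] _ => F w) hc
    exact this
  rw [hsuff z, hsuff z']
  apply (TensorProduct.assoc R N (A i) (⨁ j, B j)).symm.injective
  apply tensor_ext_right R B (N ⊗[R] A i)
  intro j
  have nat : ∀ w : N ⊗[R] ((A i) ⊗[R] (⨁ j, B j)),
      lTensor (N ⊗[R] A i) (DirectSum.component R κ B j)
        ((TensorProduct.assoc R N (A i) (⨁ j, B j)).symm w)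
      = (TensorProduct.assoc R N (A i) (B j)).symm
        (lTensor N (lTensor (A i) (DirectSum.component R κ B j)) w) := by
    intro w
    have := TensorProduct.map_map_assoc_symm (LinearMap.id (R := R) (M := N))
      (LinearMap.id (R := R) (M := A i)) (DirectSum.component R κ B j) w
    simpa [TensorProduct.map_id, lTensor] using this
  rw [nat, nat]
  apply congrArg
  rw [← LinearMap.comp_apply, ← LinearMap.comp_apply, ← LinearMap.lTensor_comp,
    LinearMap.lTensor_comp_rTensor]
  exact h i j

end Ext

section SplitLemmas

open LinearMap

/-- `splitAt` as a linear equivalence. -/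
noncomputable def splitE (a b n : ℕ) (h : n + 1 = (a + 1) + (b + 1)) :
    (⨂[R]^(n + 1) V) ≃ₗ[R] (⨂[R]^(a + 1) V) ⊗[R] (⨂[R]^(b + 1) V) :=
  (PiTensorProduct.reindex R (fun _ : Fin (n + 1) => V)
      ((finCongr h).trans finSumFinEquiv.symm)).trans
    (PiTensorProduct.tmulEquiv (R := R) (M := V)
      (ι := Fin (a + 1)) (ι₂ := Fin (b + 1))).symm

lemma splitAt_eq (a b n : ℕ) (h : n + 1 = (a + 1) + (b + 1)) :
    splitAt R V a b n h = (splitE R V a b n h).toLinearMap := rfl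

lemma splitAt_comp_symm (a b n : ℕ) (h h' : n + 1 = (a + 1) + (b + 1)) :
    splitAt R V a b n h ∘ₗ (splitE R V a b n h').symm.toLinearMap = LinearMap.id := by
  rw [splitAt_eq]
  apply LinearMap.ext
  intro x
  simp only [LinearMap.comp_apply, LinearEquiv.coe_coe, LinearMap.id_apply]
  exact (splitE R V a b n h).apply_symm_apply x

lemma ptprod_congr {k : ℕ} {g h : Fin k → V} (e : ∀ i, g i = h i) :
    (PiTensorProduct.tprod R) g = (PiTensorProduct.tprod R) h := congrArg _ (funext e)

lemma splitAt_tprod (a b n : ℕ) (h : n + 1 = (a + 1) + (b + 1)) (f : Fin (n + 1) → V) :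
    splitAt R V a b n h (tprod R f) =
      (tprod R fun i : Fin (a + 1) => f ⟨i.1, by omega⟩) ⊗ₜ[R]
      (tprod R fun j : Fin (b + 1) => f ⟨a + 1 + j.1, by omega⟩) := by
  simp only [splitAt, LinearMap.comp_apply, LinearEquiv.coe_coe, reindex_tprod,
    tmulEquiv_symm_apply]
  congr 1

lemma splitAt_assoc (a b c bc ab n : ℕ) (hbc : bc = b + c + 1) (hab : ab = a + b + 1)
    (hn : n = a + b + c + 2) (h1 : bc + 1 = (b + 1) + (c + 1))
    (h2 : n + 1 = (a + 1) + (bc + 1)) (h3 : ab + 1 = (a + 1) + (b + 1))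
    (h4 : n + 1 = (ab + 1) + (c + 1)) :
    (lTensor (⨂[R]^(a+1) V) (splitAt R V b c bc h1)).comp (splitAt R V a bc n h2) =
      ((TensorProduct.assoc R (⨂[R]^(a+1) V) (⨂[R]^(b+1) V) (⨂[R]^(c+1) V)).toLinearMap.comp
        ((rTensor (⨂[R]^(c+1) V) (splitAt R V a b ab h3)).comp
          (splitAt R V ab c n h4))) := by
  subst hbc hab hn
  apply PiTensorProduct.ext
  apply MultilinearMap.ext
  intro f
  simp only [LinearMap.compMultilinearMap_apply, LinearMap.comp_apply, splitAt_tprod,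
    lTensor_tmul, rTensor_tmul, LinearEquiv.coe_coe, TensorProduct.assoc_tmul, splitAt_tprod]
  congr 2
  exact ptprod_congr R V fun j => congrArg f (by congr 1; omega)

end SplitLemmas

section Deconcat

open LinearMap

/-- Abbreviation for the canonical inclusion. -/
noncomputable abbrev lofT (n : ℕ) : (⨂[R]^(n + 1) V) →ₗ[R] RedTensor R V :=
  DirectSum.lof R ℕ (fun k => ⨂[R]^(k + 1) V) n

/-- Abbreviation for the canonical projection. -/
noncomputable abbrev cmpT (n : ℕ) : RedTensor R V →ₗ[R] (⨂[R]^(n + 1) V) :=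
  DirectSum.component R ℕ (fun k => ⨂[R]^(k + 1) V) n

lemma cmp_lof_self (n : ℕ) : cmpT R V n ∘ₗ lofT R V n = LinearMap.id := by
  apply LinearMap.ext
  intro x
  simp only [LinearMap.comp_apply, LinearMap.id_apply]
  exact DirectSum.component.lof_self (R := R) (M := fun k => ⨂[R]^(k + 1) V) n x

lemma cmp_lof_ne {m n : ℕ} (h : n ≠ m) : cmpT R V m ∘ₗ lofT R V n = 0 := by
  apply LinearMap.ext
  intro x
  simp only [LinearMap.comp_apply, LinearMap.zero_apply]
  rw [DirectSum.component.of]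
  exact dif_neg h

lemma deconcat_lof (n : ℕ) :
    deconcat R V ∘ₗ lofT R V n =
      ∑ i : Fin n,
        (TensorProduct.map (lofT R V (i : ℕ)) (lofT R V (n - 1 - (i : ℕ)))).comp
          (splitAt R V (i : ℕ) (n - 1 - (i : ℕ)) n (by have := i.isLt; omega)) := by
  apply LinearMap.ext
  intro x
  rw [LinearMap.comp_apply, deconcat, DirectSum.toModule_lof]

/-- The key computation: a doubly-projected deconcatenation of a single summand is either a
single split (when the degrees match) or zero. -/
lemma K1 {P Q : Type} [AddCommGroup P] [Module R P] [AddCommGroup Q] [Module R Q]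
    (a b n : ℕ) (f : (⨂[R]^(a+1) V) →ₗ[R] P) (g : (⨂[R]^(b+1) V) →ₗ[R] Q)
    (hn : n = a + b + 1) (h : n + 1 = (a + 1) + (b + 1)) :
    (TensorProduct.map (f ∘ₗ cmpT R V a) (g ∘ₗ cmpT R V b)) ∘ₗ (deconcat R V ∘ₗ lofT R V n)
      = (TensorProduct.map f g) ∘ₗ splitAt R V a b n h := by
  have hb : b = n - 1 - a := by omega
  subst hb
  have ha : a < n := by omega
  apply LinearMap.ext
  intro x
  rw [LinearMap.comp_apply, deconcat_lof R V n, LinearMap.sum_apply, map_sum]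
  simp only [LinearMap.comp_apply]
  simp only [← LinearMap.comp_apply (f := TensorProduct.map (f ∘ₗ cmpT R V a) _),
    ← TensorProduct.map_comp, LinearMap.comp_assoc]
  rw [Fintype.sum_eq_single (⟨a, ha⟩ : Fin n)]
  · show (TensorProduct.map (f ∘ₗ (cmpT R V a ∘ₗ lofT R V a))
        (g ∘ₗ (cmpT R V (n - 1 - a) ∘ₗ lofT R V (n - 1 - a))))
        ((splitAt R V a (n - 1 - a) n (by omega)) x) = _
    rw [cmp_lof_self, cmp_lof_self, LinearMap.comp_id, LinearMap.comp_id]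
  · intro i hi
    have hia : (i : ℕ) ≠ a := fun hv => hi (Fin.ext hv)
    rw [cmp_lof_ne R V hia, LinearMap.comp_zero, TensorProduct.map_zero_left,
      LinearMap.zero_apply]

lemma K0 {P Q : Type} [AddCommGroup P] [Module R P] [AddCommGroup Q] [Module R Q]
    (a b n : ℕ) (f : (⨂[R]^(a+1) V) →ₗ[R] P) (g : (⨂[R]^(b+1) V) →ₗ[R] Q)
    (hn : n ≠ a + b + 1) :
    (TensorProduct.map (f ∘ₗ cmpT R V a) (g ∘ₗ cmpT R V b)) ∘ₗ (deconcat R V ∘ₗ lofT R V n)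
      = 0 := by
  apply LinearMap.ext
  intro x
  rw [LinearMap.comp_apply, deconcat_lof R V n, LinearMap.sum_apply, map_sum]
  simp only [LinearMap.comp_apply]
  simp only [← LinearMap.comp_apply (f := TensorProduct.map (f ∘ₗ cmpT R V a) _),
    ← TensorProduct.map_comp, LinearMap.comp_assoc]
  rw [LinearMap.zero_apply]
  apply Finset.sum_eq_zero
  intro i _
  by_cases hia : (i : ℕ) = a
  · have : n - 1 - (i : ℕ) ≠ b := by have := i.isLt; omega
    rw [cmp_lof_ne R V this, LinearMap.comp_zero, TensorProduct.map_zero_right,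
      LinearMap.zero_apply]
  · rw [cmp_lof_ne R V hia, LinearMap.comp_zero, TensorProduct.map_zero_left,
      LinearMap.zero_apply]

lemma K1' (a b n : ℕ) (hn : n = a + b + 1) (h : n + 1 = (a + 1) + (b + 1)) :
    (TensorProduct.map (cmpT R V a) (cmpT R V b)) ∘ₗ (deconcat R V ∘ₗ lofT R V n)
      = splitAt R V a b n h := by
  have := K1 R V a b n LinearMap.id LinearMap.id hn h
  simpa only [LinearMap.id_comp, TensorProduct.map_id, LinearMap.id_comp] using this

lemma K0' (a b n : ℕ) (hn : n ≠ a + b + 1) :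
    (TensorProduct.map (cmpT R V a) (cmpT R V b)) ∘ₗ (deconcat R V ∘ₗ lofT R V n) = 0 := by
  have := K0 R V a b n LinearMap.id LinearMap.id hn
  simpa only [LinearMap.id_comp] using this

lemma map_proj_deconcat (a b ab : ℕ) (hab : ab = a + b + 1)
    (h : ab + 1 = (a + 1) + (b + 1)) :
    (TensorProduct.map (cmpT R V a) (cmpT R V b)) ∘ₗ deconcat R V
      = splitAt R V a b ab h ∘ₗ cmpT R V ab := by
  apply DirectSum.linearMap_ext R
  intro n
  rw [LinearMap.comp_assoc, LinearMap.comp_assoc]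
  by_cases hn : n = ab
  · subst hn
    rw [K1' R V a b n hab h, cmp_lof_self, LinearMap.comp_id]
  · rw [K0' R V a b n (by omega), cmp_lof_ne R V hn, LinearMap.comp_zero]

lemma coassoc :
    LinearMap.lTensor (RedTensor R V) (deconcat R V) ∘ₗ deconcat R V
      = (TensorProduct.assoc R (RedTensor R V) (RedTensor R V) (RedTensor R V)).toLinearMap ∘ₗ
          (LinearMap.rTensor (RedTensor R V) (deconcat R V) ∘ₗ deconcat R V) := by
  apply DirectSum.linearMap_ext R
  intro n
  apply LinearMap.ext
  intro x
  apply tensor_ext_left R (fun k => ⨂[R]^(k + 1) V) ((RedTensor R V) ⊗[R] (RedTensor R V))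
  intro a
  apply tensor_ext_triple R (fun k => ⨂[R]^(k + 1) V) (fun k => ⨂[R]^(k + 1) V)
    (⨂[R]^(a + 1) V)
  intro b c
  rw [← LinearMap.comp_apply (f := LinearMap.lTensor _ _), LinearMap.lTensor_comp_rTensor,
    ← LinearMap.comp_apply (f := LinearMap.lTensor _ _), LinearMap.lTensor_comp_rTensor]
  have e1 : ∀ w : (RedTensor R V) ⊗[R] (RedTensor R V),
      TensorProduct.map (cmpT R V a) (TensorProduct.map (cmpT R V b) (cmpT R V c))
        (LinearMap.lTensor (RedTensor R V) (deconcat R V) w)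
      = TensorProduct.map (cmpT R V a)
          ((TensorProduct.map (cmpT R V b) (cmpT R V c)) ∘ₗ deconcat R V) w := by
    intro w
    rw [← LinearMap.comp_apply, LinearMap.map_comp_lTensor]
  have e2 : ∀ w : (RedTensor R V) ⊗[R] (RedTensor R V),
      TensorProduct.map (TensorProduct.map (cmpT R V a) (cmpT R V b)) (cmpT R V c)
        (LinearMap.rTensor (RedTensor R V) (deconcat R V) w)
      = TensorProduct.map ((TensorProduct.map (cmpT R V a) (cmpT R V b)) ∘ₗ deconcat R V)
          (cmpT R V c) w := by
    intro w
    rw [← LinearMap.comp_apply, LinearMap.map_comp_rTensor]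
  simp only [LinearMap.comp_apply, LinearEquiv.coe_coe]
  rw [e1, TensorProduct.map_map_assoc, e2,
    map_proj_deconcat R V b c (b + c + 1) rfl (by omega),
    map_proj_deconcat R V a b (a + b + 1) rfl (by omega)]
  by_cases hn : n = a + b + c + 2
  · have eK1 := congrArg (fun F : _ →ₗ[R] _ => F x)
      (K1 R V a (b + c + 1) n LinearMap.id (splitAt R V b c (b + c + 1) (by omega))
        (by omega) (by omega))
    have eK2 := congrArg (fun F : _ →ₗ[R] _ => F x)
      (K1 R V (a + b + 1) c n (splitAt R V a b (a + b + 1) (by omega)) LinearMap.id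
        (by omega) (by omega))
    simp only [LinearMap.comp_apply, LinearMap.id_comp] at eK1 eK2
    rw [eK1, eK2]
    have eSA := congrArg (fun F : _ →ₗ[R] _ => F x)
      (splitAt_assoc R V a b c (b + c + 1) (a + b + 1) n rfl rfl hn
        (by omega) (by omega) (by omega) (by omega))
    simp only [LinearMap.comp_apply, LinearEquiv.coe_coe] at eSA
    rw [show LinearMap.lTensor (⨂[R]^(a+1) V) (splitAt R V b c (b + c + 1) (by omega))
        = TensorProduct.map LinearMap.id (splitAt R V b c (b + c + 1) (by omega)) from rfl,
      show LinearMap.rTensor (⨂[R]^(c+1) V) (splitAt R V a b (a + b + 1) (by omega))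
        = TensorProduct.map (splitAt R V a b (a + b + 1) (by omega)) LinearMap.id from rfl]
      at eSA
    exact eSA
  · have eK1 := congrArg (fun F : _ →ₗ[R] _ => F x)
      (K0 R V a (b + c + 1) n LinearMap.id (splitAt R V b c (b + c + 1) (by omega))
        (by omega))
    have eK2 := congrArg (fun F : _ →ₗ[R] _ => F x)
      (K0 R V (a + b + 1) c n (splitAt R V a b (a + b + 1) (by omega)) LinearMap.id
        (by omega))
    simp only [LinearMap.comp_apply, LinearMap.id_comp, LinearMap.zero_apply] at eK1 eK2
    rw [eK1, eK2, map_zero]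

end Deconcat

section Main

open LinearMap

variable (g : RedTensor R V →ₗ[R] W)

/-- The components of the unique coalgebra morphism, defined recursively. -/
noncomputable def Gmap : (m : ℕ) → (RedTensor R V →ₗ[R] (⨂[R]^(m + 1) W))
  | 0 => (PiTensorProduct.subsingletonEquiv (0 : Fin 1)).symm.toLinearMap ∘ₗ g
  | (m + 1) => (splitE R W 0 m (m + 1) (by omega)).symm.toLinearMap ∘ₗ
      ((TensorProduct.map (Gmap 0) (Gmap m)) ∘ₗ deconcat R V)

lemma Gmap_zero : Gmap R V W g 0
    = (PiTensorProduct.subsingletonEquiv (0 : Fin 1)).symm.toLinearMap ∘ₗ g := by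
  simp only [Gmap]

lemma Gmap_succ (m : ℕ) : Gmap R V W g (m + 1)
    = (splitE R W 0 m (m + 1) (by omega)).symm.toLinearMap ∘ₗ
      ((TensorProduct.map (Gmap R V W g 0) (Gmap R V W g m)) ∘ₗ deconcat R V) := by
  conv_lhs => rw [Gmap]

lemma Gmap_vanish (m n : ℕ) (h : n < m) : Gmap R V W g m ∘ₗ lofT R V n = 0 := by
  induction m generalizing n with
  | zero => omega
  | succ m ih =>
    apply LinearMap.ext
    intro x
    have hd := congrArg (fun F : _ →ₗ[R] _ => F x) (deconcat_lof R V n)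
    simp only [LinearMap.comp_apply, LinearMap.sum_apply] at hd
    simp only [LinearMap.comp_apply, Gmap_succ, LinearMap.zero_apply, hd, map_sum]
    have hz : ∀ i : Fin n,
        TensorProduct.map (Gmap R V W g 0) (Gmap R V W g m)
          ((TensorProduct.map (lofT R V (i : ℕ)) (lofT R V (n - 1 - (i : ℕ))))
            ((splitAt R V (i : ℕ) (n - 1 - (i : ℕ)) n (by have := i.isLt; omega)) x)) = 0 := by
      intro i
      rw [← LinearMap.comp_apply (f := TensorProduct.map _ _), ← TensorProduct.map_comp,
        ih (n - 1 - (i : ℕ)) (by have := i.isLt; omega), TensorProduct.map_zero_right,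
        LinearMap.zero_apply]
    rw [Finset.sum_congr rfl (fun i _ => by rw [hz i, map_zero]), Finset.sum_const_zero]

/-- The coalgebra morphism determined by `g`. -/
noncomputable def Fmap : RedTensor R V →ₗ[R] RedTensor R W :=
  DirectSum.toModule R ℕ (RedTensor R W) fun n =>
    ∑ m ∈ Finset.range (n + 1), lofT R W m ∘ₗ (Gmap R V W g m ∘ₗ lofT R V n)

lemma cmp_F (m : ℕ) : cmpT R W m ∘ₗ Fmap R V W g = Gmap R V W g m := by
  apply DirectSum.linearMap_ext R
  intro n
  apply LinearMap.ext
  intro x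
  simp only [LinearMap.comp_apply]
  rw [Fmap, DirectSum.toModule_lof, LinearMap.sum_apply, map_sum]
  simp only [LinearMap.comp_apply]
  by_cases hm : m ≤ n
  · rw [Finset.sum_eq_single_of_mem m (Finset.mem_range.mpr (by omega))]
    · exact DirectSum.component.lof_self (R := R) (M := fun k => ⨂[R]^(k + 1) W) m _
    · intro b _ hbm
      rw [DirectSum.component.of, dif_neg hbm]
  · have h1 : ∀ m' ∈ Finset.range (n + 1),
        DirectSum.component R ℕ (fun k => ⨂[R]^(k + 1) W) m
          (lofT R W m' (Gmap R V W g m' (lofT R V n x))) = 0 := by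
      intro m' hm'
      rw [DirectSum.component.of, dif_neg (by simp only [Finset.mem_range] at hm'; omega)]
    rw [Finset.sum_congr rfl h1, Finset.sum_const_zero]
    have := congrArg (fun F : _ →ₗ[R] _ => F x) (Gmap_vanish R V W g m n (by omega))
    simp only [LinearMap.comp_apply, LinearMap.zero_apply] at this
    exact this.symm

/-- The key compatibility: split components of `Gmap` are given by tensor squares of `Gmap`. -/
lemma split_G (a b ab : ℕ) (hab : ab = a + b + 1) (h : ab + 1 = (a + 1) + (b + 1)) :
    splitAt R W a b ab h ∘ₗ Gmap R V W g ab
      = (TensorProduct.map (Gmap R V W g a) (Gmap R V W g b)) ∘ₗ deconcat R V := by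
  induction a generalizing ab with
  | zero =>
    obtain rfl : ab = b + 1 := by omega
    rw [Gmap_succ, ← LinearMap.comp_assoc, splitAt_comp_symm, LinearMap.id_comp]
  | succ a iha =>
    obtain rfl : ab = a + b + 1 + 1 := by omega
    apply LinearMap.ext
    intro z
    apply (LinearEquiv.rTensor (⨂[R]^(b+1) W) (splitE R W 0 a (a + 1) (by omega))).injective
    have hcoe : ∀ u : (⨂[R]^(a+1+1) W) ⊗[R] (⨂[R]^(b+1) W),
        (LinearEquiv.rTensor (⨂[R]^(b+1) W) (splitE R W 0 a (a + 1) (by omega))) u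
        = rTensor (⨂[R]^(b+1) W) (splitAt R W 0 a (a + 1) (by omega)) u := fun u => rfl
    rw [hcoe, hcoe]
    simp only [LinearMap.comp_apply]
    rw [Gmap_succ R V W g (a + b + 1), Gmap_succ R V W g a]
    simp only [LinearMap.comp_apply, LinearEquiv.coe_coe]
    apply (TensorProduct.assoc R (⨂[R]^(0+1) W) (⨂[R]^(a+1) W) (⨂[R]^(b+1) W)).injective
    -- Left-hand side
    have eSA := congrArg (fun F : _ →ₗ[R] _ =>
        F ((splitE R W 0 (a + b + 1) (a + b + 1 + 1) (by omega)).symm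
          ((TensorProduct.map (Gmap R V W g 0) (Gmap R V W g (a + b + 1)))
            (deconcat R V z))))
      (splitAt_assoc R W 0 a b (a + b + 1) (a + 1) (a + b + 1 + 1) rfl (by omega) (by omega)
        (by omega) (by omega) (by omega) (by omega))
    simp only [LinearMap.comp_apply, LinearEquiv.coe_coe] at eSA
    rw [← eSA]
    have ecan := congrArg (fun F : _ →ₗ[R] _ =>
        F ((TensorProduct.map (Gmap R V W g 0) (Gmap R V W g (a + b + 1)))
          (deconcat R V z)))
      (splitAt_comp_symm R W 0 (a + b + 1) (a + b + 1 + 1) (by omega) (by omega))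
    simp only [LinearMap.comp_apply, LinearMap.id_apply, LinearEquiv.coe_coe] at ecan
    rw [ecan]
    rw [← LinearMap.comp_apply (f := lTensor _ _), LinearMap.lTensor_comp_map,
      iha (a + b + 1) rfl (by omega)]
    have em : ∀ w, TensorProduct.map (Gmap R V W g 0)
        ((TensorProduct.map (Gmap R V W g a) (Gmap R V W g b)) ∘ₗ deconcat R V) w
        = TensorProduct.map (Gmap R V W g 0)
            (TensorProduct.map (Gmap R V W g a) (Gmap R V W g b))
          (lTensor (RedTensor R V) (deconcat R V) w) := by
      intro w
      rw [← LinearMap.comp_apply (f := TensorProduct.map _ (TensorProduct.map _ _)),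
        LinearMap.map_comp_lTensor]
    rw [em]
    have eco := congrArg (fun F : _ →ₗ[R] _ => F z) (coassoc R V)
    simp only [LinearMap.comp_apply, LinearEquiv.coe_coe] at eco
    rw [eco, TensorProduct.map_map_assoc]
    rw [← LinearMap.comp_apply (f := TensorProduct.map (TensorProduct.map _ _) _),
      LinearMap.map_comp_rTensor]
    -- Right-hand side
    rw [← LinearMap.comp_apply (f := rTensor _ _), LinearMap.rTensor_comp_map,
      ← LinearMap.comp_assoc, splitAt_comp_symm, LinearMap.id_comp]

lemma F_coalg : deconcat R W ∘ₗ Fmap R V W g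
    = (TensorProduct.map (Fmap R V W g) (Fmap R V W g)) ∘ₗ deconcat R V := by
  apply LinearMap.ext
  intro z
  apply tensor_ext_pair R (fun k => ⨂[R]^(k + 1) W) (fun k => ⨂[R]^(k + 1) W)
  intro a b
  simp only [LinearMap.comp_apply]
  have h1 := congrArg (fun F : _ →ₗ[R] _ => F (Fmap R V W g z))
    (map_proj_deconcat R W a b (a + b + 1) rfl (by omega))
  simp only [LinearMap.comp_apply] at h1
  rw [h1]
  have h2 := congrArg (fun F : _ →ₗ[R] _ => F z) (cmp_F R V W g (a + b + 1))
  simp only [LinearMap.comp_apply] at h2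
  rw [h2]
  have h3 := congrArg (fun F : _ →ₗ[R] _ => F z)
    (split_G R V W g a b (a + b + 1) rfl (by omega))
  simp only [LinearMap.comp_apply] at h3
  rw [h3]
  -- right-hand side
  rw [← LinearMap.comp_apply (f := TensorProduct.map (cmpT R W a) (cmpT R W b)),
    ← TensorProduct.map_comp, cmp_F, cmp_F]

lemma F_corestrict : corestrict R W ∘ₗ Fmap R V W g = g := by
  rw [corestrict, LinearMap.comp_assoc, cmp_F, Gmap_zero, ← LinearMap.comp_assoc]
  apply LinearMap.ext
  intro x
  simp only [LinearMap.comp_apply, LinearEquiv.coe_coe, LinearMap.id_apply]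
  exact (PiTensorProduct.subsingletonEquiv (R := R) (s := fun _ : Fin 1 => W) (0 : Fin 1)).apply_symm_apply (g x)

lemma F_unique (F' : RedTensor R V →ₗ[R] RedTensor R W)
    (hc : deconcat R W ∘ₗ F' = (TensorProduct.map F' F') ∘ₗ deconcat R V)
    (hg : corestrict R W ∘ₗ F' = g) : F' = Fmap R V W g := by
  have hcmp0 : cmpT R W 0 ∘ₗ F' = Gmap R V W g 0 := by
    rw [corestrict, LinearMap.comp_assoc] at hg
    rw [Gmap_zero, ← hg, ← LinearMap.comp_assoc]
    apply LinearMap.ext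
    intro x
    simp only [LinearMap.comp_apply, LinearEquiv.coe_coe]
    rw [(PiTensorProduct.subsingletonEquiv (0 : Fin 1)).symm_apply_apply]
  have hcmp : ∀ m, cmpT R W m ∘ₗ F' = Gmap R V W g m := by
    intro m
    induction m with
    | zero => exact hcmp0
    | succ m ih =>
      have e : splitAt R W 0 m (m + 1) (by omega) ∘ₗ (cmpT R W (m + 1) ∘ₗ F')
          = splitAt R W 0 m (m + 1) (by omega) ∘ₗ Gmap R V W g (m + 1) := by
        rw [← LinearMap.comp_assoc, ← map_proj_deconcat R W 0 m (m + 1) (by omega) (by omega),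
          LinearMap.comp_assoc, hc, ← LinearMap.comp_assoc, ← TensorProduct.map_comp,
          hcmp0, ih, Gmap_succ R V W g m, ← LinearMap.comp_assoc, splitAt_comp_symm,
          LinearMap.id_comp]
      apply LinearMap.ext
      intro x
      have := congrArg (fun F : _ →ₗ[R] _ => F x) e
      simp only [LinearMap.comp_apply] at this
      exact (splitE R W 0 m (m + 1) (by omega)).injective this
  apply LinearMap.ext
  intro x
  apply DirectSum.ext_component R
  intro m
  have h1 := congrArg (fun F : _ →ₗ[R] _ => F x) (hcmp m)
  have h2 := congrArg (fun F : _ →ₗ[R] _ => F x) (cmp_F R V W g m)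
  simp only [LinearMap.comp_apply] at h1 h2
  exact h1.trans h2.symm

end Main


/-- **Statement 7 (cofreeness of the reduced tensor coalgebra).**  Every linear map
`g : T̄(V) → W` (equivalently, every family of linear maps `fₖ : V^{⊗k} → W`) is the
corestriction `π₁ ∘ F` of a unique morphism of non-counital coalgebras
`F : T̄(V) → T̄(W)`, i.e. a unique linear map satisfying `Δ∘F = (F⊗F)∘Δ`. -/
theorem tensor_coalgebra_cofree (g : RedTensor R V →ₗ[R] W) :
    ∃! F : RedTensor R V →ₗ[R] RedTensor R W,
      (deconcat R W).comp F = (TensorProduct.map F F).comp (deconcat R V) ∧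
      (corestrict R W).comp F = g :=
  ⟨Fmap R V W g, ⟨F_coalg R V W g, F_corestrict R V W g⟩,
    fun F' hF' => F_unique R V W g F' hF'.1 hF'.2⟩
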